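/- arXiv:1809.06210 — 13 statements merged into one kernel-verified Lean document; each statement's English description precedes it below -/
import Mathlib

section
/- Let A be a quantum B-algebra and F a filter of A. Then for all upper sets X, Y ⊆ A one has μ_F(X)·μ_F(Y) ⊆ μ_F(X·Y); consequently the collection U(F) of upper sets of A contained in F is closed under the multiplication · of upper sets and under arbitrary unions. -/
/-- A quantum B-algebra: a poset with two implications satisfying the
quantum B-algebra axioms. -/
class QuantumBAlgebra (A : Type*) extends PartialOrder A where
  arr : A → A → A
  sarr : A → A → A
  arr_arr : ∀ x y z : A, arr y z ≤ arr (arr x y) (arr x z)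
  sarr_sarr : ∀ x y z : A, sarr y z ≤ sarr (sarr x y) (sarr x z)
  arr_mono : ∀ x y z : A, y ≤ z → arr x y ≤ arr x z
  exchange : ∀ x y z : A, x ≤ arr y z ↔ y ≤ sarr x z

namespace QuantumBAlgebra

variable {A : Type*} [QuantumBAlgebra A]

/-- The multiplication of (upper) subsets: X·Y := {a | ∃ y ∈ Y, (y → a) ∈ X}. -/
def umul (X Y : Set A) : Set A := {a : A | ∃ y ∈ Y, arr y a ∈ X}

/-- A filter: a non-empty upper set F with F·F ⊆ F. -/
def QFilter (F : Set A) : Prop := F.Nonempty ∧ IsUpperSet F ∧ umul F F ⊆ F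

end QuantumBAlgebra

open QuantumBAlgebra

/-- For a filter `F` of a quantum B-algebra `A` and upper sets `X, Y`:
`μ_F(X)·μ_F(Y) ⊆ μ_F(X·Y)`; consequently the upper sets contained in `F` are
closed under the multiplication of upper sets and under arbitrary unions. -/
theorem muF_mul_subset_and_UF_subquantale {A : Type*} [QuantumBAlgebra A]
    (F : Set A) (hF : QFilter F) :
    (∀ X Y : Set A, IsUpperSet X → IsUpperSet Y →
        umul (F ∩ X) (F ∩ Y) ⊆ F ∩ umul X Y) ∧
    (∀ X Y : Set A, IsUpperSet X → IsUpperSet Y → X ⊆ F → Y ⊆ F →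
        IsUpperSet (umul X Y) ∧ umul X Y ⊆ F) ∧
    (∀ S : Set (Set A), (∀ X ∈ S, IsUpperSet X ∧ X ⊆ F) →
        IsUpperSet (⋃₀ S) ∧ ⋃₀ S ⊆ F) := by
  obtain ⟨-, hFup, hFF⟩ := hF
  refine ⟨?_, ?_, ?_⟩
  · rintro X Y hX hY a ⟨y, ⟨hyF, hyY⟩, hFX, hXa⟩
    exact ⟨hFF ⟨y, hyF, hFX⟩, y, hyY, hXa⟩
  · intro X Y hX hY hXF hYF
    constructor
    · rintro a b hab ⟨y, hyY, hya⟩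
      exact ⟨y, hyY, hX (QuantumBAlgebra.arr_mono y a b hab) hya⟩
    · rintro a ⟨y, hyY, hya⟩
      exact hFF ⟨y, hYF hyY, hXF hya⟩
  · intro S hS
    constructor
    · exact isUpperSet_sUnion fun X hX => (hS X hX).1
    · rintro a ⟨X, hXS, haX⟩
      exact (hS X hXS).2 haX
end

section
/- Let A be an integral quantum B-algebra, F a filter of A, and X an upper set of A. Then μ_F(X) = (μ_F(X)·μ_F(X)) ∩ X, i.e. μ_F(X) = μ_{μ_F(X)·μ_F(X)}(X). -/
/-- An integral quantum B-algebra: a quantum B-algebra whose unit element `1`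
is the greatest element. -/
class IntegralQuantumBAlgebra (A : Type*) extends QuantumBAlgebra A, One A where
  le_one : ∀ x : A, x ≤ 1
  one_arr : ∀ x : A, arr 1 x = x
  one_sarr : ∀ x : A, sarr 1 x = x

namespace QuantumBAlgebra

variable {A : Type*} [QuantumBAlgebra A]

/-- The residual Y → Z := {x | ∀ y ∈ Y, ∀ z, x ≤ y → z implies z ∈ Z}. -/
def uarr (Y Z : Set A) : Set A := {x : A | ∀ y ∈ Y, ∀ z : A, x ≤ arr y z → z ∈ Z}

/-- The residual X ⇝ Z := {y | ∀ x ∈ X, ∀ z, y ≤ x ⇝ z implies z ∈ Z}. -/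
def usarr (X Z : Set A) : Set A := {y : A | ∀ x ∈ X, ∀ z : A, y ≤ sarr x z → z ∈ Z}

end QuantumBAlgebra

open QuantumBAlgebra

/-- `μ_F(X) = μ_{μ_F(X)·μ_F(X)}(X)` for a filter `F` and upper set `X`
of an integral quantum B-algebra. -/
theorem muF_eq_mu_muF_mul_muF {A : Type*} [IntegralQuantumBAlgebra A]
    (F X : Set A) (hF : QFilter F) (hX : IsUpperSet X) :
    F ∩ X = (umul (F ∩ X) (F ∩ X)) ∩ X := by
  obtain ⟨⟨f, hf⟩, hup, hmul⟩ := hF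
  ext a
  constructor
  · rintro ⟨haF, haX⟩
    have h1aa : (1 : A) ≤ QuantumBAlgebra.arr a a := by
      rw [QuantumBAlgebra.exchange, IntegralQuantumBAlgebra.one_sarr]
    have h1F : (1 : A) ∈ F := hup (IntegralQuantumBAlgebra.le_one f) hf
    have h1X : (1 : A) ∈ X := hX (IntegralQuantumBAlgebra.le_one a) haX
    exact ⟨⟨a, ⟨haF, haX⟩, hup h1aa h1F, hX h1aa h1X⟩, haX⟩
  · rintro ⟨⟨y, ⟨hyF, _⟩, hF2, _⟩, haX⟩
    exact ⟨hmul ⟨y, hyF, hF2⟩, haX⟩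
end

section
/- Let A be an integral quantum B-algebra, F a filter of A, and X an upper set of A. If 1 ∈ μ_F(X)⇝(μ_F(X)→X), then μ_F(X) · μ_F(μ_F(X)⇝(μ_F(X)→X)) · μ_F(X) = μ_F(X). -/
open QuantumBAlgebra

/-- If `1 ∈ μ_F(X) ⇝ (μ_F(X) → X)` then
`μ_F(X) · μ_F(μ_F(X) ⇝ (μ_F(X) → X)) · μ_F(X) = μ_F(X)`. -/
theorem muF_mul_muF_usarr_uarr {A : Type*} [IntegralQuantumBAlgebra A]
    (F X : Set A) (hF : QFilter F) (hX : IsUpperSet X)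
    (h1 : (1 : A) ∈ usarr (F ∩ X) (uarr (F ∩ X) X)) :
    umul (umul (F ∩ X) (F ∩ usarr (F ∩ X) (uarr (F ∩ X) X))) (F ∩ X) = F ∩ X := by
  obtain ⟨hne, hup, hmul⟩ := hF
  have h1F : (1 : A) ∈ F := by
    obtain ⟨b, hb⟩ := hne
    exact hup (IntegralQuantumBAlgebra.le_one b) hb
  ext a
  constructor
  · rintro ⟨y, hyS, t, ⟨htF, htT⟩, hS⟩
    have haF : a ∈ F := by
      have h2 : QuantumBAlgebra.arr y a ∈ F :=
        hmul ⟨t, htF, hS.1⟩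
      exact hmul ⟨y, hyS.1, h2⟩
    refine ⟨haF, ?_⟩
    have harr : QuantumBAlgebra.arr y a ∈ uarr (F ∩ X) X := by
      apply htT (QuantumBAlgebra.arr t (QuantumBAlgebra.arr y a)) hS
      exact (QuantumBAlgebra.exchange _ _ _).mp le_rfl
    exact harr y hyS a le_rfl
  · intro ha
    have h1X : (1 : A) ∈ X := hX (IntegralQuantumBAlgebra.le_one a) ha.2
    have haa : QuantumBAlgebra.arr a a = 1 := by
      apply le_antisymm (IntegralQuantumBAlgebra.le_one _)
      exact (QuantumBAlgebra.exchange 1 a a).mpr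
        (le_of_eq (IntegralQuantumBAlgebra.one_sarr a).symm)
    refine ⟨a, ha, 1, ⟨h1F, h1⟩, ?_⟩
    rw [IntegralQuantumBAlgebra.one_arr, haa]
    exact ⟨h1F, h1X⟩
end

section
/- Let A be an integral quantum B-algebra, F a filter of A, and X an upper set of A. Then μ_F(X) is a filter of A if and only if 1 ∈ μ_F(X) ∩ (μ_F(X)⇝(μ_F(X)→X)). -/
open QuantumBAlgebra

/-- `μ_F(X)` is a filter of `A` iff `1 ∈ μ_F(X) ∩ (μ_F(X) ⇝ (μ_F(X) → X))`. -/
theorem muF_filter_iff {A : Type*} [IntegralQuantumBAlgebra A]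
    (F X : Set A) (hF : QFilter F) (hX : IsUpperSet X) :
    QFilter (F ∩ X) ↔ (1 : A) ∈ (F ∩ X) ∩ usarr (F ∩ X) (uarr (F ∩ X) X) := by
  obtain ⟨hFne, hFup, hFmul⟩ := hF
  have hMup : IsUpperSet (F ∩ X) := hFup.inter hX
  constructor
  · rintro ⟨⟨m, hm⟩, -, hmul⟩
    have h1 : (1 : A) ∈ F ∩ X := hMup (IntegralQuantumBAlgebra.le_one m) hm
    refine ⟨h1, ?_⟩
    intro x hx z hz
    have hxz : x ≤ z := by
      have := (QuantumBAlgebra.exchange x 1 z).mpr hz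
      rwa [IntegralQuantumBAlgebra.one_arr] at this
    have hzM : z ∈ F ∩ X := hMup hxz hx
    intro y hy w hw
    have : w ∈ F ∩ X := hmul ⟨y, hy, hMup hw hzM⟩
    exact this.2
  · rintro ⟨h1, hs⟩
    refine ⟨⟨1, h1⟩, hMup, ?_⟩
    rintro a ⟨y, hy, hya⟩
    have haF : a ∈ F := hFmul ⟨y, hy.1, hya.1⟩
    have harr : QuantumBAlgebra.arr y a ∈ uarr (F ∩ X) X := by
      apply hs _ hya
      rw [(QuantumBAlgebra.exchange _ 1 _).symm, IntegralQuantumBAlgebra.one_arr]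
    exact ⟨haF, harr y hy a le_rfl⟩
end

section
/- Let A be an integral quantum B-algebra, F a filter of A, and X an upper set of A with 1 ∈ X ∩ F. Then μ_F(X) · μ_F(μ_F(X)⇝X) = μ_F(X) = μ_F(μ_F(X)→X) · μ_F(X). -/
open QuantumBAlgebra

/-- `μ_F(X) · μ_F(μ_F(X) ⇝ X) = μ_F(X) = μ_F(μ_F(X) → X) · μ_F(X)` when
`1 ∈ X ∩ F`. -/
theorem muF_mul_muF_usarr_eq {A : Type*} [IntegralQuantumBAlgebra A]
    (F X : Set A) (hF : QFilter F) (hX : IsUpperSet X) (h1 : (1 : A) ∈ X ∩ F) :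
    umul (F ∩ X) (F ∩ usarr (F ∩ X) X) = F ∩ X ∧
    umul (F ∩ uarr (F ∩ X) X) (F ∩ X) = F ∩ X := by

  obtain ⟨hX1, hF1⟩ := h1
  obtain ⟨-, hFup, hFmul⟩ := hF
  constructor
  · apply Set.Subset.antisymm
    · rintro a ⟨y, ⟨⟨hyF, hy⟩, ⟨hyaF, hyaX⟩⟩⟩
      refine ⟨hFmul ⟨y, hyF, hyaF⟩, ?_⟩
      exact hy (QuantumBAlgebra.arr y a) ⟨hyaF, hyaX⟩ a
        ((QuantumBAlgebra.exchange _ _ _).mp le_rfl)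
    · rintro a ⟨haF, haX⟩
      refine ⟨1, ⟨hF1, ?_⟩, ?_⟩
      · rintro x ⟨hxF, hxX⟩ z hz
        have : x ≤ z := by
          have := (QuantumBAlgebra.exchange x 1 z).mpr hz
          rwa [IntegralQuantumBAlgebra.one_arr] at this
        exact hX this hxX
      · rw [IntegralQuantumBAlgebra.one_arr]; exact ⟨haF, haX⟩
  · apply Set.Subset.antisymm
    · rintro a ⟨y, ⟨⟨hyF, hyX⟩, ⟨hyaF, hya⟩⟩⟩
      refine ⟨hFmul ⟨y, hyF, hyaF⟩, hya y ⟨hyF, hyX⟩ a le_rfl⟩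
    · rintro a ⟨haF, haX⟩
      have h11 : QuantumBAlgebra.arr a a = 1 := by
        apply le_antisymm (IntegralQuantumBAlgebra.le_one _)
        apply (QuantumBAlgebra.exchange _ _ _).mpr
        rw [IntegralQuantumBAlgebra.one_sarr]
      refine ⟨a, ⟨haF, haX⟩, ?_⟩
      rw [h11]
      refine ⟨hF1, ?_⟩
      rintro y ⟨hyF, hyX⟩ z hz
      have : y ≤ z := by
        have := (QuantumBAlgebra.exchange 1 y z).mp hz
        rwa [IntegralQuantumBAlgebra.one_sarr] at this
      exact hX this hyX
end

section
/- Let A be an integral quantum B-algebra, F a filter of A, and X an upper set of A with 1 ∈ X ∩ F. Then μ_F(μ_F(X)→X) → (μ_F(X)→X) = μ_F(X)→X and μ_F(μ_F(X)⇝X) ⇝ (μ_F(X)⇝X) = μ_F(X)⇝X. -/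
open QuantumBAlgebra

section Aux

variable {A : Type*} [QuantumBAlgebra A]

lemma aux_arr_taut (x u : A) : x ≤ arr (sarr x u) u :=
  (exchange x (sarr x u) u).mpr le_rfl

lemma aux_sarr_taut (x u : A) : x ≤ sarr (arr x u) u :=
  (exchange (arr x u) x u).mp le_rfl

lemma aux_arr_anti {b b' : A} (c : A) (h : b ≤ b') : arr b' c ≤ arr b c :=
  (exchange (arr b' c) b c).mpr (h.trans (aux_sarr_taut b' c))

lemma aux_sarr_anti {b b' : A} (c : A) (h : b ≤ b') : sarr b' c ≤ sarr b c :=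
  (exchange b (sarr b' c) c).mp (h.trans (aux_arr_taut b' c))

end Aux

/-- `μ_F(μ_F(X) → X) → (μ_F(X) → X) = μ_F(X) → X` and
`μ_F(μ_F(X) ⇝ X) ⇝ (μ_F(X) ⇝ X) = μ_F(X) ⇝ X` when `1 ∈ X ∩ F`. -/
theorem muF_uarr_residual_eq {A : Type*} [IntegralQuantumBAlgebra A]
    (F X : Set A) (hF : QFilter F) (hX : IsUpperSet X) (h1 : (1 : A) ∈ X ∩ F) :
    uarr (F ∩ uarr (F ∩ X) X) (uarr (F ∩ X) X) = uarr (F ∩ X) X ∧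
    usarr (F ∩ usarr (F ∩ X) X) (usarr (F ∩ X) X) = usarr (F ∩ X) X := by
  obtain ⟨h1X, h1F⟩ := h1
  obtain ⟨-, hFup, hFmul⟩ := hF
  -- 1 belongs to both residuals
  have h1Y : (1 : A) ∈ uarr (F ∩ X) X := by
    intro w hw z hz
    have : w ≤ z := by
      have := (QuantumBAlgebra.exchange (1 : A) w z).mp hz
      rwa [IntegralQuantumBAlgebra.one_sarr] at this
    exact hX this hw.2
  have h1Z : (1 : A) ∈ usarr (F ∩ X) X := by
    intro w hw z hz
    have : w ≤ z := by
      have := (QuantumBAlgebra.exchange w (1 : A) z).mpr hz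
      rwa [IntegralQuantumBAlgebra.one_arr] at this
    exact hX this hw.2
  constructor
  · apply Set.Subset.antisymm
    · -- easy direction, using 1 ∈ F ∩ (μ_F(X) → X)
      intro x hx
      refine hx 1 ⟨h1F, h1Y⟩ x ?_
      rw [IntegralQuantumBAlgebra.one_arr]
    · intro x hx y hy z hxz w hw u hzu
      -- set s := sarr x u ; show s ∈ F ∩ X and conclude via tautology
      have hyz : y ≤ QuantumBAlgebra.sarr x z :=
        (QuantumBAlgebra.exchange x y z).mp hxz
      have hchain : QuantumBAlgebra.sarr z u ≤
          QuantumBAlgebra.sarr y (QuantumBAlgebra.sarr x u) :=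
        (QuantumBAlgebra.sarr_sarr x z u).trans (aux_sarr_anti _ hyz)
      have hws : w ≤ QuantumBAlgebra.sarr y (QuantumBAlgebra.sarr x u) :=
        ((QuantumBAlgebra.exchange z w u).mp hzu).trans hchain
      have hy3 : y ≤ QuantumBAlgebra.arr w (QuantumBAlgebra.sarr x u) :=
        (QuantumBAlgebra.exchange y w (QuantumBAlgebra.sarr x u)).mpr hws
      have hsF : QuantumBAlgebra.sarr x u ∈ F :=
        hFmul ⟨w, hw.1, hFup hy3 hy.1⟩
      have hsX : QuantumBAlgebra.sarr x u ∈ X := hy.2 w hw _ hy3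
      exact hx _ ⟨hsF, hsX⟩ u (aux_arr_taut x u)
  · apply Set.Subset.antisymm
    · intro x hx
      refine hx 1 ⟨h1F, h1Z⟩ x ?_
      rw [IntegralQuantumBAlgebra.one_sarr]
    · intro x hx y hy z hxz w hw u hzu
      have hyz : y ≤ QuantumBAlgebra.arr x z :=
        (QuantumBAlgebra.exchange y x z).mpr hxz
      have hchain : QuantumBAlgebra.arr z u ≤
          QuantumBAlgebra.arr y (QuantumBAlgebra.arr x u) :=
        (QuantumBAlgebra.arr_arr x z u).trans (aux_arr_anti _ hyz)
      have hws : w ≤ QuantumBAlgebra.arr y (QuantumBAlgebra.arr x u) :=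
        ((QuantumBAlgebra.exchange w z u).mpr hzu).trans hchain
      have hy3 : y ≤ QuantumBAlgebra.sarr w (QuantumBAlgebra.arr x u) :=
        (QuantumBAlgebra.exchange w y (QuantumBAlgebra.arr x u)).mp hws
      have hsF : QuantumBAlgebra.arr x u ∈ F := by
        refine hFmul ⟨QuantumBAlgebra.sarr w (QuantumBAlgebra.arr x u),
          hFup hy3 hy.1, ?_⟩
        exact hFup (aux_arr_taut w (QuantumBAlgebra.arr x u)) hw.1
      have hsX : QuantumBAlgebra.arr x u ∈ X := hy.2 w hw _ hy3
      exact hx _ ⟨hsF, hsX⟩ u (aux_sarr_taut x u)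
end

section
/- Let A be an integral quantum B-algebra, F a filter of A, and X an upper set of A with 1 ∈ X ∩ F. Then (μ_F(X)→X) · μ_F(μ_F(X)→X) = μ_F(X)→X and μ_F(μ_F(X)⇝X) · (μ_F(X)⇝X) = μ_F(X)⇝X. -/
open QuantumBAlgebra

section Aux

variable {A : Type*} [QuantumBAlgebra A]

lemma aux_arr_sarr_le (x y z : A) : arr y (sarr x z) ≤ sarr x (arr y z) := by
  refine (exchange x _ _).mp ?_
  exact le_trans ((exchange x (sarr x z) z).mpr le_rfl) (arr_arr y (sarr x z) z)

lemma aux_sarr_arr_le (x y z : A) : sarr x (arr y z) ≤ arr y (sarr x z) := by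
  refine (exchange _ y _).mpr ?_
  exact le_trans ((exchange (arr y z) y z).mp le_rfl) (sarr_sarr x (arr y z) z)

end Aux

section Aux2

variable {A : Type*} [IntegralQuantumBAlgebra A]

lemma aux_arr_self (a : A) : arr a a = (1 : A) := by
  refine le_antisymm (IntegralQuantumBAlgebra.le_one _) ?_
  refine (QuantumBAlgebra.exchange 1 a a).mpr ?_
  rw [IntegralQuantumBAlgebra.one_sarr]

lemma aux_one_mem_uarr {F X : Set A} (hX : IsUpperSet X) :
    (1 : A) ∈ uarr (F ∩ X) X := by
  intro b hb z hz
  have : b ≤ z := by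
    have := (QuantumBAlgebra.exchange 1 b z).mp hz
    rwa [IntegralQuantumBAlgebra.one_sarr] at this
  exact hX this hb.2

lemma aux_one_mem_usarr {F X : Set A} (hX : IsUpperSet X) :
    (1 : A) ∈ usarr (F ∩ X) X := by
  intro x hx z hz
  have : x ≤ z := by
    have := (QuantumBAlgebra.exchange x 1 z).mpr hz
    rwa [IntegralQuantumBAlgebra.one_arr] at this
  exact hX this hx.2

end Aux2

/-- `(μ_F(X) → X) · μ_F(μ_F(X) → X) = μ_F(X) → X` and
`μ_F(μ_F(X) ⇝ X) · (μ_F(X) ⇝ X) = μ_F(X) ⇝ X` when `1 ∈ X ∩ F`. -/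
theorem uarr_mul_muF_uarr_eq {A : Type*} [IntegralQuantumBAlgebra A]
    (F X : Set A) (hF : QFilter F) (hX : IsUpperSet X) (h1 : (1 : A) ∈ X ∩ F) :
    umul (uarr (F ∩ X) X) (F ∩ uarr (F ∩ X) X) = uarr (F ∩ X) X ∧
    umul (F ∩ usarr (F ∩ X) X) (usarr (F ∩ X) X) = usarr (F ∩ X) X := by
  obtain ⟨hFne, hFup, hFmul⟩ := hF
  constructor
  · ext a
    simp only [umul, Set.mem_setOf_eq]
    constructor
    · rintro ⟨y, ⟨hyF, hyU⟩, htU⟩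
      intro b hb z haz
      have h1 : arr y a ≤ arr y (arr b z) := QuantumBAlgebra.arr_mono y a _ haz
      have h2 : y ≤ sarr (arr y a) (arr b z) :=
        (QuantumBAlgebra.exchange (arr y a) y (arr b z)).mp h1
      have h3 : y ≤ arr b (sarr (arr y a) z) := h2.trans (aux_sarr_arr_le _ b z)
      have hcF : sarr (arr y a) z ∈ F := hFmul ⟨b, hb.1, hFup h3 hyF⟩
      have hcX : sarr (arr y a) z ∈ X := hyU b hb _ h3
      have h4 : arr y a ≤ arr (sarr (arr y a) z) z :=
        (QuantumBAlgebra.exchange (arr y a) _ z).mpr le_rfl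
      exact htU _ ⟨hcF, hcX⟩ z h4
    · intro ha
      exact ⟨1, ⟨h1.2, aux_one_mem_uarr hX⟩,
        by rwa [IntegralQuantumBAlgebra.one_arr]⟩
  · ext a
    simp only [umul, Set.mem_setOf_eq]
    constructor
    · rintro ⟨y, hyV, htF, htV⟩
      intro x hx z haz
      have h1 : arr y a ≤ arr y (sarr x z) := QuantumBAlgebra.arr_mono y a _ haz
      have h2 : arr y a ≤ sarr x (arr y z) := h1.trans (aux_arr_sarr_le x y z)
      have h3 : x ≤ arr (arr y a) (arr y z) :=
        (QuantumBAlgebra.exchange x (arr y a) (arr y z)).mpr h2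
      have hcF : arr y z ∈ F := hFmul ⟨arr y a, htF, hFup h3 hx.1⟩
      have hcX : arr y z ∈ X := htV x hx _ h2
      have h4 : y ≤ sarr (arr y z) z :=
        (QuantumBAlgebra.exchange (arr y z) y z).mp le_rfl
      exact hyV _ ⟨hcF, hcX⟩ z h4
    · intro ha
      refine ⟨a, ha, ?_⟩
      rw [aux_arr_self]
      exact ⟨h1.2, aux_one_mem_usarr hX⟩
end

section
/- Let A be an integral quantum B-algebra, F a filter of A, and X an upper set of A with 1 ∈ X ∩ F. Then μ_F(μ_F(X)→X) = μ_F(μ_F(X)→X) · μ_F(μ_F(X)→X), and if 1 ∈ μ_F(μ_F(X)→X) then μ_F(μ_F(X)→X) is a filter of A. Dually, μ_F(μ_F(X)⇝X) = μ_F(μ_F(X)⇝X) · μ_F(μ_F(X)⇝X), and if 1 ∈ μ_F(μ_F(X)⇝X) then μ_F(μ_F(X)⇝X) is a filter of A. -/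
open QuantumBAlgebra

section Helpers

variable {A : Type*} [IntegralQuantumBAlgebra A]

open QuantumBAlgebra IntegralQuantumBAlgebra

lemma QBA.sarr_anti {x y : A} (t : A) (h : x ≤ y) : sarr y t ≤ sarr x t := by
  have hy : y ≤ arr (sarr y t) t := (exchange y (sarr y t) t).mpr le_rfl
  exact (exchange x (sarr y t) t).mp (le_trans h hy)

lemma QBA.uarr_upper (Y Z : Set A) : IsUpperSet (uarr Y Z) := by
  intro a b hab ha y hy z hz
  exact ha y hy z (le_trans hab hz)

lemma QBA.usarr_upper (Y Z : Set A) : IsUpperSet (usarr Y Z) := by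
  intro a b hab ha y hy z hz
  exact ha y hy z (le_trans hab hz)

end Helpers

/-- `μ_F(μ_F(X) → X)` is idempotent and, if it contains `1`, a filter;
dually for `⇝`. -/

theorem muF_uarr_idempotent_and_filter {A : Type*} [IntegralQuantumBAlgebra A]
    (F X : Set A) (hF : QFilter F) (hX : IsUpperSet X) (h1 : (1 : A) ∈ X ∩ F) :
    (F ∩ uarr (F ∩ X) X =
        umul (F ∩ uarr (F ∩ X) X) (F ∩ uarr (F ∩ X) X)) ∧
    ((1 : A) ∈ F ∩ uarr (F ∩ X) X → QFilter (F ∩ uarr (F ∩ X) X)) ∧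
    (F ∩ usarr (F ∩ X) X =
        umul (F ∩ usarr (F ∩ X) X) (F ∩ usarr (F ∩ X) X)) ∧
    ((1 : A) ∈ F ∩ usarr (F ∩ X) X → QFilter (F ∩ usarr (F ∩ X) X)) := by
  obtain ⟨h1X, h1F⟩ := h1
  obtain ⟨-, hFup, hFmul⟩ := hF
  have exch := QuantumBAlgebra.exchange (A := A)
  have one_arr := IntegralQuantumBAlgebra.one_arr (A := A)
  have one_sarr := IntegralQuantumBAlgebra.one_sarr (A := A)
  -- 1 belongs to both residuals
  have h1U : (1 : A) ∈ uarr (F ∩ X) X := by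
    intro b hb z hz
    have : b ≤ z := by
      have := (exch 1 b z).mp hz
      rwa [one_sarr] at this
    exact hX this hb.2
  have h1V : (1 : A) ∈ usarr (F ∩ X) X := by
    intro b hb z hz
    have : b ≤ z := by
      have := (exch b 1 z).mpr hz
      rwa [one_arr] at this
    exact hX this hb.2
  -- S ⊆ S·S for both
  have hsubU : F ∩ uarr (F ∩ X) X ⊆
      umul (F ∩ uarr (F ∩ X) X) (F ∩ uarr (F ∩ X) X) := by
    intro a ha
    exact ⟨1, ⟨h1F, h1U⟩, by rwa [one_arr]⟩
  have hsubV : F ∩ usarr (F ∩ X) X ⊆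
      umul (F ∩ usarr (F ∩ X) X) (F ∩ usarr (F ∩ X) X) := by
    intro a ha
    exact ⟨1, ⟨h1F, h1V⟩, by rwa [one_arr]⟩
  -- S·S ⊆ S for the arr case
  have hmulU : umul (F ∩ uarr (F ∩ X) X) (F ∩ uarr (F ∩ X) X) ⊆
      F ∩ uarr (F ∩ X) X := by
    rintro a ⟨y, ⟨hyF, hyU⟩, hwF, hwU⟩
    have haF : a ∈ F := hFmul ⟨y, hyF, hwF⟩
    refine ⟨haF, ?_⟩
    intro b hb z hz
    set w := QuantumBAlgebra.arr y a with hw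
    -- b ≤ sarr a z
    have hb1 : b ≤ QuantumBAlgebra.sarr a z := (exch a b z).mp hz
    -- y ≤ sarr w a
    have hy1 : y ≤ QuantumBAlgebra.sarr w a := (exch w y a).mp le_rfl
    have hchain : QuantumBAlgebra.sarr a z ≤
        QuantumBAlgebra.sarr y (QuantumBAlgebra.sarr w z) :=
      le_trans (QuantumBAlgebra.sarr_sarr w a z)
        (QBA.sarr_anti (QuantumBAlgebra.sarr w z) hy1)
    set d := QuantumBAlgebra.sarr w z with hd
    have hbd : b ≤ QuantumBAlgebra.sarr y d := le_trans hb1 hchain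
    have hyd : y ≤ QuantumBAlgebra.arr b d := (exch y b d).mpr hbd
    have hdF : d ∈ F := hFmul ⟨b, hb.1, hFup hyd hyF⟩
    have hdX : d ∈ X := hyU b hb d hyd
    exact hwU d ⟨hdF, hdX⟩ z ((exch w d z).mpr le_rfl)
  -- S·S ⊆ S for the sarr case
  have hmulV : umul (F ∩ usarr (F ∩ X) X) (F ∩ usarr (F ∩ X) X) ⊆
      F ∩ usarr (F ∩ X) X := by
    rintro a ⟨y, ⟨hyF, hyV⟩, hwF, hwV⟩
    have haF : a ∈ F := hFmul ⟨y, hyF, hwF⟩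
    refine ⟨haF, ?_⟩
    intro b hb z hz
    set w := QuantumBAlgebra.arr y a with hw
    set c := QuantumBAlgebra.arr y z with hc
    have hb1 : b ≤ QuantumBAlgebra.arr a z := (exch b a z).mpr hz
    have hb2 : b ≤ QuantumBAlgebra.arr w c :=
      le_trans hb1 (QuantumBAlgebra.arr_arr y a z)
    have hwc : w ≤ QuantumBAlgebra.sarr b c := (exch b w c).mp hb2
    have hcF : c ∈ F := hFmul ⟨w, hwF, hFup hb2 hb.1⟩
    have hcX : c ∈ X := hwV b hb c hwc
    exact hyV c ⟨hcF, hcX⟩ z ((exch c y z).mp le_rfl)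
  refine ⟨Set.Subset.antisymm hsubU hmulU, ?_,
    Set.Subset.antisymm hsubV hmulV, ?_⟩
  · intro h1S
    exact ⟨⟨1, h1S⟩, hFup.inter (QBA.uarr_upper _ _),
      (Set.Subset.antisymm hsubU hmulU) ▸ hmulU⟩
  · intro h1S
    exact ⟨⟨1, h1S⟩, hFup.inter (QBA.usarr_upper _ _),
      (Set.Subset.antisymm hsubV hmulV) ▸ hmulV⟩
end

section
/- Let A be a pseudo-hoop and let x, y ∈ A satisfy x∨y = 1. Then x·y = x∧y = y·x and x→y = x⇝y = y. -/
/-- A pseudo-hoop: an algebra `(A; ·, →, ⇝, 1)` satisfying the pseudo-hoop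
axioms; the induced relation `x ≤ y ↔ x → y = 1` is a partial order. -/
class PseudoHoop (A : Type*) extends Mul A, One A, PartialOrder A where
  arr : A → A → A
  sarr : A → A → A
  mul_one' : ∀ x : A, x * 1 = x
  one_mul' : ∀ x : A, 1 * x = x
  arr_self : ∀ x : A, arr x x = 1
  sarr_self : ∀ x : A, sarr x x = 1
  arr_mul : ∀ x y z : A, arr (x * y) z = arr x (arr y z)
  sarr_mul : ∀ x y z : A, sarr (x * y) z = sarr y (sarr x z)
  div₁ : ∀ x y : A, (arr x y) * x = (arr y x) * y
  div₂ : ∀ x y : A, (arr x y) * x = x * (sarr x y)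
  div₃ : ∀ x y : A, x * (sarr x y) = y * (sarr y x)
  le_iff_arr : ∀ x y : A, x ≤ y ↔ arr x y = 1

namespace PseudoHoop

variable {A : Type*} [PseudoHoop A]

/-- The meet `x ∧ y = (x → y) · x` of a pseudo-hoop. -/
def pinf (x y : A) : A := (arr x y) * x

/-- A filter of a pseudo-hoop: an upper set containing `1` that is closed
under multiplication. -/
def PHFilter (F : Set A) : Prop :=
  IsUpperSet F ∧ (1 : A) ∈ F ∧ ∀ x ∈ F, ∀ y ∈ F, x * y ∈ F

/-- The polar `M^⊥ = {x | x ∨ y = 1 for all y ∈ M}`, where `x ∨ y = 1` means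
that `1` is the least upper bound of `{x, y}`. -/
def polar (M : Set A) : Set A := {x : A | ∀ y ∈ M, IsLUB {x, y} (1 : A)}

/-- `ν_F(X)`: the upper bounds of `X` lying in `F`. -/
def nuF (F X : Set A) : Set A := {a : A | a ∈ F ∧ ∀ x ∈ X, x ≤ a}

/-- Elementwise implication `Y ⟶ X = {a → x | a ∈ Y, x ∈ X}`. -/
def setArr (Y X : Set A) : Set A := {c : A | ∃ a ∈ Y, ∃ x ∈ X, c = arr a x}

/-- Elementwise implication `Y ⟿ X = {a ⇝ x | a ∈ Y, x ∈ X}`. -/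
def setSarr (Y X : Set A) : Set A := {c : A | ∃ a ∈ Y, ∃ x ∈ X, c = sarr a x}

end PseudoHoop

open PseudoHoop

section Aux

variable {A : Type*} [PseudoHoop A]

lemma ph_pinf_le_right (a b : A) : (arr a b) * a ≤ b := by
  rw [le_iff_arr, arr_mul, arr_self]

lemma ph_arr_one_left (a : A) : arr (1 : A) a = a := by
  apply le_antisymm
  · have := ph_pinf_le_right (1 : A) a
    rwa [mul_one'] at this
  · rw [le_iff_arr, ← arr_mul, mul_one', arr_self]

lemma ph_arr_one_right (a : A) : arr a (1 : A) = 1 := by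
  have hx : (arr a 1) * a = a := by
    rw [div₁, ph_arr_one_left, mul_one']
  have := arr_mul (arr a (1 : A)) a (1 : A)
  rw [hx, arr_self] at this
  exact this

lemma ph_le_one (a : A) : a ≤ (1 : A) := by
  rw [le_iff_arr]; exact ph_arr_one_right a

lemma ph_sarr_one_right (a : A) : sarr a (1 : A) = 1 := by
  have hx : a * sarr a 1 = a := by
    rw [← div₂, ph_arr_one_right, one_mul']
  have := sarr_mul a (sarr a (1 : A)) (1 : A)
  rw [hx, sarr_self] at this
  exact this

lemma ph_le_iff_sarr (a b : A) : a ≤ b ↔ sarr a b = 1 := by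
  constructor
  · intro hle
    rw [le_iff_arr] at hle
    have hx : a * sarr a b = a := by rw [← div₂, hle, one_mul']
    have := sarr_mul a (sarr a b) b
    rw [hx, sarr_self] at this
    exact this
  · intro hs
    have hx : (arr a b) * a = a := by rw [div₂, hs, mul_one']
    have := arr_mul (arr a b) a b
    rw [hx, arr_self] at this
    rw [le_iff_arr]
    exact this

end Aux

/-- If `x ∨ y = 1` in a pseudo-hoop then `x·y = x ∧ y = y·x` and
`x → y = x ⇝ y = y`. -/
theorem mul_eq_inf_of_lub_one {A : Type*} [PseudoHoop A] (x y : A)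
    (h : IsLUB {x, y} (1 : A)) :
    x * y = pinf x y ∧ x * y = y * x ∧ arr x y = y ∧ sarr x y = y := by
  have hub : ∀ t : A, x ≤ t → y ≤ t → t = 1 := by
    intro t hx hy
    refine le_antisymm (ph_le_one t) (h.2 ?_)
    intro z hz
    rcases hz with rfl | hz
    · exact hx
    · rcases hz with rfl; exact hy
  -- x*y ≤ y
  have h1 : x * y ≤ y := by
    rw [le_iff_arr, arr_mul, arr_self, ph_arr_one_right]
  -- y*x ≤ y
  have hyx : y * x ≤ y := by
    rw [ph_le_iff_sarr, sarr_mul, sarr_self, ph_sarr_one_right]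
  -- y ≤ arr x y
  have h2 : y ≤ arr x y := by
    rw [le_iff_arr, ← arr_mul]
    rw [le_iff_arr] at hyx
    exact hyx
  -- p*x ≤ y, the meet is below y
  have h5 : (arr x y) * x ≤ y := ph_pinf_le_right x y
  -- p*y ≤ y
  have h3 : (arr x y) * y ≤ y := by
    rw [le_iff_arr, arr_mul, arr_self, ph_arr_one_right]
  -- y ≤ sarr (arr x y) y
  have h4 : y ≤ sarr (arr x y) y := by
    rw [ph_le_iff_sarr, ← sarr_mul]
    rw [ph_le_iff_sarr] at h3
    exact h3
  -- x ≤ sarr (arr x y) y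
  have h6 : x ≤ sarr (arr x y) y := by
    rw [ph_le_iff_sarr, ← sarr_mul]
    rw [ph_le_iff_sarr] at h5
    exact h5
  have h8 : arr x y ≤ y := by
    rw [ph_le_iff_sarr]
    exact hub _ h6 h4
  have hp : arr x y = y := le_antisymm h8 h2
  -- now the sarr side
  have h9 : y ≤ sarr x y := by
    rw [ph_le_iff_sarr, ← sarr_mul]
    rw [ph_le_iff_sarr] at h1
    exact h1
  have h10 : y * sarr x y ≤ y := by
    rw [ph_le_iff_sarr, sarr_mul, sarr_self, ph_sarr_one_right]
  have h11 : y ≤ arr (sarr x y) y := by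
    rw [le_iff_arr, ← arr_mul]
    rw [le_iff_arr] at h10
    exact h10
  have h12 : x * sarr x y ≤ y := by
    rw [← div₂]; exact h5
  have h13 : x ≤ arr (sarr x y) y := by
    rw [le_iff_arr, ← arr_mul]
    rw [le_iff_arr] at h12
    exact h12
  have h15 : sarr x y ≤ y := by
    rw [le_iff_arr]
    exact hub _ h13 h11
  have hs : sarr x y = y := le_antisymm h15 h9
  have hmul : x * y = pinf x y := by
    rw [pinf, div₂, hs]
  refine ⟨hmul, ?_, hp, hs⟩
  rw [hmul, pinf, hp]
end

section
/- Let A be a pseudo-hoop and M ⊆ A. Define f(x,y) := x∧y for x ∈ M^⊥ and y ∈ M^⊥⊥. Then f is injective on M^⊥ × M^⊥⊥, and for all x₁,x₂ ∈ M^⊥ and y₁,y₂ ∈ M^⊥⊥ one has f(x₁,y₁)·f(x₂,y₂) = f(x₁·x₂, y₁·y₂), f(x₁,y₁)→f(x₂,y₂) = f(x₁→x₂, y₁→y₂), and f(x₁,y₁)⇝f(x₂,y₂) = f(x₁⇝x₂, y₁⇝y₂) (where x₁→x₂, x₁⇝x₂ ∈ M^⊥ and y₁→y₂, y₁⇝y₂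 ∈ M^⊥⊥). -/
open PseudoHoop

namespace PHAux
variable {A : Type*} [PseudoHoop A]

lemma le_one (x : A) : x ≤ 1 := by
  have h1 : arr (arr x 1 * x) (1:A) = 1 := by rw [arr_mul]; exact arr_self _
  have h2 : arr x (1:A) * x = arr 1 x := by rw [div₁, mul_one']
  rw [h2] at h1
  have h3 : arr (1:A) x ≤ 1 := (le_iff_arr _ _).mpr h1
  have h4 : x ≤ arr (1:A) x := (le_iff_arr _ _).mpr
    (by rw [← arr_mul, mul_one', arr_self])
  exact le_trans h4 h3

lemma arr_one (x : A) : arr x 1 = 1 := (le_iff_arr _ _).mp (le_one x)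

lemma one_arr (x : A) : arr (1:A) x = x := by
  have := div₁ x (1:A)
  rw [arr_one, one_mul', mul_one'] at this
  exact this.symm

lemma sarr_one (x : A) : sarr x (1:A) = 1 := by
  have hx : x * sarr x 1 = x := by rw [← div₂, arr_one, one_mul']
  have := sarr_mul x (sarr x (1:A)) (1:A)
  rw [hx, sarr_self] at this
  exact this

lemma one_sarr (x : A) : sarr (1:A) x = x := by
  have := div₂ (1:A) x
  rw [one_arr, mul_one', one_mul'] at this
  exact this.symm

lemma le_iff_sarr (x y : A) : x ≤ y ↔ sarr x y = 1 := by
  constructor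
  · intro h
    have h' := (le_iff_arr x y).mp h
    have hx : y * sarr y x = x := by rw [← div₃, ← div₂, h', one_mul']
    have := sarr_mul y (sarr y x) y
    rw [hx, sarr_self, sarr_one] at this
    exact this
  · intro h
    have hx : arr y x * y = x := by rw [← div₁, div₂, h, mul_one']
    have := arr_mul (arr y x) y y
    rw [hx, arr_self, arr_one] at this
    exact (le_iff_arr x y).mpr this

lemma le_arr_iff {x y z : A} : x ≤ arr y z ↔ x * y ≤ z := by
  rw [le_iff_arr, le_iff_arr, arr_mul]

lemma le_sarr_iff {x y z : A} : y ≤ sarr x z ↔ x * y ≤ z := by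
  rw [le_iff_sarr, le_iff_sarr, sarr_mul]

lemma pinf_le_left (x y : A) : pinf x y ≤ x := by
  rw [le_iff_arr]; show arr (arr x y * x) x = 1
  rw [arr_mul, arr_self, arr_one]

lemma pinf_comm (x y : A) : pinf x y = pinf y x := div₁ x y

lemma pinf_le_right (x y : A) : pinf x y ≤ y := pinf_comm x y ▸ pinf_le_left y x

lemma pinf_eq_mul_sarr (x y : A) : pinf x y = x * sarr x y := div₂ x y

lemma arr_mono_right {x z y : A} (h : z ≤ y) : arr x z ≤ arr x y :=
  le_arr_iff.mpr (le_trans (pinf_le_right x z) h)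

lemma sarr_mono_right {x z y : A} (h : z ≤ y) : sarr x z ≤ sarr x y :=
  le_sarr_iff.mpr (le_trans (pinf_eq_mul_sarr x z ▸ pinf_le_right x z) h)

lemma mul_le_mul_right {a b : A} (c : A) (h : a ≤ b) : a * c ≤ b * c :=
  le_arr_iff.mp (le_trans h (le_arr_iff.mpr le_rfl))

lemma mul_le_mul_left {a b : A} (c : A) (h : a ≤ b) : c * a ≤ c * b :=
  le_sarr_iff.mp (le_trans h (le_sarr_iff.mpr le_rfl))

lemma mul_le_left (x y : A) : x * y ≤ x := by
  have := mul_le_mul_left x (le_one y); rwa [mul_one'] at this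

lemma mul_le_right (x y : A) : x * y ≤ y := by
  have := mul_le_mul_right y (le_one x); rwa [one_mul'] at this

lemma le_self_arr (x y : A) : y ≤ arr x y := le_arr_iff.mpr (mul_le_left y x)

lemma le_self_sarr (x y : A) : y ≤ sarr x y := le_sarr_iff.mpr (mul_le_right x y)

lemma le_pinf {z x y : A} (hx : z ≤ x) (hy : z ≤ y) : z ≤ pinf x y := by
  have hz : arr x z * x = z := by
    have h2 : pinf z x = z := by
      show arr z x * z = z
      rw [(le_iff_arr z x).mp hx, one_mul']
    calc arr x z * x = pinf x z := rfl
      _ = pinf z x := (pinf_comm x z)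
      _ = z := h2
  calc z = arr x z * x := hz.symm
    _ ≤ arr x y * x := mul_le_mul_right x (arr_mono_right hy)

lemma mul_assoc' (x y z : A) : (x * y) * z = x * (y * z) := by
  have key : ∀ w : A, arr ((x*y)*z) w = arr (x*(y*z)) w := by
    intro w
    rw [arr_mul, arr_mul, arr_mul, arr_mul]
  apply le_antisymm
  · rw [le_iff_arr, key, arr_self]
  · rw [le_iff_arr, ← key, arr_self]

lemma mem_ub_pair {a b c : A} (h₁ : a ≤ c) (h₂ : b ≤ c) :
    c ∈ upperBounds ({a, b} : Set A) := by
  rintro x (rfl | rfl) <;> assumption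

lemma isLUB_pair_one {a b : A} (h : ∀ c, a ≤ c → b ≤ c → (1:A) ≤ c) :
    IsLUB ({a, b} : Set A) (1:A) :=
  ⟨mem_ub_pair (le_one a) (le_one b),
   fun c hc => h c (hc (Set.mem_insert _ _)) (hc (Set.mem_insert_iff.mpr (Or.inr rfl)))⟩

lemma lub_le {a b c : A} (h : IsLUB ({a, b} : Set A) (1:A)) (ha : a ≤ c) (hb : b ≤ c) :
    (1:A) ≤ c := h.2 (mem_ub_pair ha hb)

lemma lub_comm {a b : A} (h : IsLUB ({a, b} : Set A) (1:A)) :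
    IsLUB ({b, a} : Set A) (1:A) := by rwa [Set.pair_comm]

lemma lub_mono_left {a a' b : A} (h : IsLUB ({a, b} : Set A) (1:A)) (ha : a ≤ a') :
    IsLUB ({a', b} : Set A) (1:A) :=
  isLUB_pair_one fun c h₁ h₂ => lub_le h (le_trans ha h₁) h₂

lemma arr_eq_of_lub {a b : A} (h : IsLUB ({a, b} : Set A) (1:A)) : arr a b = b := by
  apply le_antisymm
  · have h1 : a ≤ sarr (arr a b) b := le_sarr_iff.mpr (pinf_le_right a b)
    have h2 : b ≤ sarr (arr a b) b := le_self_sarr _ _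
    have h3 : sarr (arr a b) b = 1 := le_antisymm (le_one _) (lub_le h h1 h2)
    exact (le_iff_sarr _ _).mpr h3
  · exact le_self_arr a b

lemma sarr_eq_of_lub {a b : A} (h : IsLUB ({a, b} : Set A) (1:A)) : sarr a b = b := by
  apply le_antisymm
  · have h1 : a ≤ arr (sarr a b) b :=
      le_arr_iff.mpr (by rw [← pinf_eq_mul_sarr]; exact pinf_le_right a b)
    have h2 : b ≤ arr (sarr a b) b := le_self_arr _ _
    have h3 : arr (sarr a b) b = 1 := le_antisymm (le_one _) (lub_le h h1 h2)
    exact (le_iff_arr _ _).mpr h3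
  · exact le_self_sarr a b

lemma pinf_eq_mul_of_lub {a b : A} (h : IsLUB ({a, b} : Set A) (1:A)) :
    pinf a b = a * b := by
  rw [pinf_eq_mul_sarr, sarr_eq_of_lub h]

lemma pinf_eq_mul_of_lub' {a b : A} (h : IsLUB ({a, b} : Set A) (1:A)) :
    pinf a b = b * a := by
  show arr a b * a = b * a
  rw [arr_eq_of_lub h]

lemma mul_lub {a b c : A} (hac : IsLUB ({a, c} : Set A) (1:A))
    (hbc : IsLUB ({b, c} : Set A) (1:A)) : IsLUB ({a * b, c} : Set A) (1:A) := by
  apply isLUB_pair_one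
  intro u h1 h2
  have ha : a ≤ arr b u := le_arr_iff.mpr h1
  have hc : c ≤ arr b u := le_trans h2 (le_self_arr b u)
  have hb1 : arr b u = 1 := le_antisymm (le_one _) (lub_le hac ha hc)
  have hb : b ≤ u := (le_iff_arr _ _).mpr hb1
  exact lub_le hbc hb h2

lemma arr_pinf (a b c : A) : arr a (pinf b c) = pinf (arr a b) (arr a c) := by
  apply le_antisymm
  · exact le_pinf (arr_mono_right (pinf_le_left b c)) (arr_mono_right (pinf_le_right b c))
  · apply le_arr_iff.mpr
    apply le_pinf
    · exact le_trans (mul_le_mul_right a (pinf_le_left _ _)) (pinf_le_right a b)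
    · exact le_trans (mul_le_mul_right a (pinf_le_right _ _)) (pinf_le_right a c)

lemma sarr_pinf (a b c : A) : sarr a (pinf b c) = pinf (sarr a b) (sarr a c) := by
  apply le_antisymm
  · exact le_pinf (sarr_mono_right (pinf_le_left b c)) (sarr_mono_right (pinf_le_right b c))
  · apply le_sarr_iff.mpr
    apply le_pinf
    · refine le_trans (mul_le_mul_left a (pinf_le_left _ _)) ?_
      rw [← pinf_eq_mul_sarr]; exact pinf_le_right a b
    · refine le_trans (mul_le_mul_left a (pinf_le_right _ _)) ?_
      rw [← pinf_eq_mul_sarr]; exact pinf_le_right a c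

end PHAux

/-- The map `f(x, y) = x ∧ y` is an embedding of `M^⊥ × M^⊥⊥` into `A`:
it is injective and preserves `·`, `→` and `⇝` (computed coordinatewise,
the coordinatewise results lying again in `M^⊥` resp. `M^⊥⊥`). -/
theorem polar_product_embedding {A : Type*} [PseudoHoop A] (M : Set A) :
    ∀ x₁ ∈ polar M, ∀ y₁ ∈ polar (polar M),
      ∀ x₂ ∈ polar M, ∀ y₂ ∈ polar (polar M),
        (pinf x₁ y₁ = pinf x₂ y₂ → x₁ = x₂ ∧ y₁ = y₂) ∧
        pinf x₁ y₁ * pinf x₂ y₂ = pinf (x₁ * x₂) (y₁ * y₂) ∧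
        arr x₁ x₂ ∈ polar M ∧ arr y₁ y₂ ∈ polar (polar M) ∧
        arr (pinf x₁ y₁) (pinf x₂ y₂) = pinf (arr x₁ x₂) (arr y₁ y₂) ∧
        sarr x₁ x₂ ∈ polar M ∧ sarr y₁ y₂ ∈ polar (polar M) ∧
        sarr (pinf x₁ y₁) (pinf x₂ y₂) = pinf (sarr x₁ x₂) (sarr y₁ y₂) := by
  intro x₁ hx₁ y₁ hy₁ x₂ hx₂ y₂ hy₂
  have l11 : IsLUB ({x₁, y₁} : Set A) 1 := PHAux.lub_comm (hy₁ x₁ hx₁)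
  have l12 : IsLUB ({x₁, y₂} : Set A) 1 := PHAux.lub_comm (hy₂ x₁ hx₁)
  have l21 : IsLUB ({x₂, y₁} : Set A) 1 := PHAux.lub_comm (hy₁ x₂ hx₂)
  have l22 : IsLUB ({x₂, y₂} : Set A) 1 := PHAux.lub_comm (hy₂ x₂ hx₂)
  refine ⟨?_, ?_, ?_, ?_, ?_, ?_, ?_, ?_⟩
  · -- injectivity
    intro hp
    constructor
    · apply le_antisymm
      · -- x₁ ≤ x₂
        have h1 : x₁ ≤ arr y₁ (pinf x₁ y₁) :=
          PHAux.le_arr_iff.mpr (PHAux.le_pinf (PHAux.mul_le_left _ _) (PHAux.mul_le_right _ _))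
        rw [hp] at h1
        have h2 : arr y₁ (pinf x₂ y₂) ≤ arr y₁ x₂ :=
          PHAux.arr_mono_right (PHAux.pinf_le_left _ _)
        have h3 : arr y₁ x₂ = x₂ := PHAux.arr_eq_of_lub (hy₁ x₂ hx₂)
        exact le_trans (le_trans h1 h2) (le_of_eq h3)
      · -- x₂ ≤ x₁
        have h1 : x₂ ≤ arr y₂ (pinf x₂ y₂) :=
          PHAux.le_arr_iff.mpr (PHAux.le_pinf (PHAux.mul_le_left _ _) (PHAux.mul_le_right _ _))
        rw [← hp] at h1
        have h2 : arr y₂ (pinf x₁ y₁) ≤ arr y₂ x₁ :=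
          PHAux.arr_mono_right (PHAux.pinf_le_left _ _)
        have h3 : arr y₂ x₁ = x₁ := PHAux.arr_eq_of_lub (hy₂ x₁ hx₁)
        exact le_trans (le_trans h1 h2) (le_of_eq h3)
    · apply le_antisymm
      · -- y₁ ≤ y₂
        have h1 : y₁ ≤ arr x₁ (pinf x₁ y₁) :=
          PHAux.le_arr_iff.mpr (PHAux.le_pinf (PHAux.mul_le_right _ _) (PHAux.mul_le_left _ _))
        rw [hp] at h1
        have h2 : arr x₁ (pinf x₂ y₂) ≤ arr x₁ y₂ :=
          PHAux.arr_mono_right (PHAux.pinf_le_right _ _)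
        have h3 : arr x₁ y₂ = y₂ := PHAux.arr_eq_of_lub l12
        exact le_trans (le_trans h1 h2) (le_of_eq h3)
      · -- y₂ ≤ y₁
        have h1 : y₂ ≤ arr x₂ (pinf x₂ y₂) :=
          PHAux.le_arr_iff.mpr (PHAux.le_pinf (PHAux.mul_le_right _ _) (PHAux.mul_le_left _ _))
        rw [← hp] at h1
        have h2 : arr x₂ (pinf x₁ y₁) ≤ arr x₂ y₁ :=
          PHAux.arr_mono_right (PHAux.pinf_le_right _ _)
        have h3 : arr x₂ y₁ = y₁ := PHAux.arr_eq_of_lub l21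
        exact le_trans (le_trans h1 h2) (le_of_eq h3)
  · -- product
    have hcomm : y₁ * x₂ = x₂ * y₁ :=
      (PHAux.pinf_eq_mul_of_lub' l21).symm.trans (PHAux.pinf_eq_mul_of_lub l21)
    have lX1 : IsLUB ({x₁ * x₂, y₁} : Set A) 1 := PHAux.mul_lub l11 l21
    have lX2 : IsLUB ({x₁ * x₂, y₂} : Set A) 1 := PHAux.mul_lub l12 l22
    have lfinal : IsLUB ({x₁ * x₂, y₁ * y₂} : Set A) 1 :=
      PHAux.lub_comm (PHAux.mul_lub (PHAux.lub_comm lX1) (PHAux.lub_comm lX2))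
    rw [PHAux.pinf_eq_mul_of_lub l11, PHAux.pinf_eq_mul_of_lub l22,
        PHAux.pinf_eq_mul_of_lub lfinal]
    calc x₁ * y₁ * (x₂ * y₂) = x₁ * (y₁ * (x₂ * y₂)) := PHAux.mul_assoc' _ _ _
      _ = x₁ * (y₁ * x₂ * y₂) := by rw [PHAux.mul_assoc']
      _ = x₁ * (x₂ * y₁ * y₂) := by rw [hcomm]
      _ = x₁ * (x₂ * (y₁ * y₂)) := by rw [PHAux.mul_assoc']
      _ = x₁ * x₂ * (y₁ * y₂) := (PHAux.mul_assoc' _ _ _).symm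
  · intro m hm
    exact PHAux.lub_mono_left (hx₂ m hm) (PHAux.le_self_arr x₁ x₂)
  · intro z hz
    exact PHAux.lub_mono_left (hy₂ z hz) (PHAux.le_self_arr y₁ y₂)
  · -- arrow equation
    have hp1 : pinf x₁ y₁ = y₁ * x₁ := PHAux.pinf_eq_mul_of_lub' l11
    have larxt : IsLUB ({y₁, arr x₁ x₂} : Set A) 1 :=
      PHAux.lub_comm (PHAux.lub_mono_left l21 (PHAux.le_self_arr x₁ x₂))
    calc arr (pinf x₁ y₁) (pinf x₂ y₂)
        = arr (y₁ * x₁) (pinf x₂ y₂) := by rw [hp1]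
      _ = arr y₁ (arr x₁ (pinf x₂ y₂)) := PseudoHoop.arr_mul _ _ _
      _ = arr y₁ (pinf (arr x₁ x₂) (arr x₁ y₂)) := by rw [PHAux.arr_pinf]
      _ = arr y₁ (pinf (arr x₁ x₂) y₂) := by rw [PHAux.arr_eq_of_lub l12]
      _ = pinf (arr y₁ (arr x₁ x₂)) (arr y₁ y₂) := PHAux.arr_pinf _ _ _
      _ = pinf (arr x₁ x₂) (arr y₁ y₂) := by rw [PHAux.arr_eq_of_lub larxt]
  · intro m hm
    exact PHAux.lub_mono_left (hx₂ m hm) (PHAux.le_self_sarr x₁ x₂)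
  · intro z hz
    exact PHAux.lub_mono_left (hy₂ z hz) (PHAux.le_self_sarr y₁ y₂)
  · -- sarr equation
    have hp1 : pinf x₁ y₁ = x₁ * y₁ := PHAux.pinf_eq_mul_of_lub l11
    have lsxt : IsLUB ({y₁, sarr x₁ x₂} : Set A) 1 :=
      PHAux.lub_comm (PHAux.lub_mono_left l21 (PHAux.le_self_sarr x₁ x₂))
    calc sarr (pinf x₁ y₁) (pinf x₂ y₂)
        = sarr (x₁ * y₁) (pinf x₂ y₂) := by rw [hp1]
      _ = sarr y₁ (sarr x₁ (pinf x₂ y₂)) := PseudoHoop.sarr_mul _ _ _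
      _ = sarr y₁ (pinf (sarr x₁ x₂) (sarr x₁ y₂)) := by rw [PHAux.sarr_pinf]
      _ = sarr y₁ (pinf (sarr x₁ x₂) y₂) := by rw [PHAux.sarr_eq_of_lub l12]
      _ = pinf (sarr y₁ (sarr x₁ x₂)) (sarr y₁ y₂) := PHAux.sarr_pinf _ _ _
      _ = pinf (sarr x₁ x₂) (sarr y₁ y₂) := by rw [PHAux.sarr_eq_of_lub lsxt]
end

section
/- Let A be an integral residuated ∨-semilattice. Then every →-prime filter of A is ∨-prime, every ⇝-prime filter of A is ∨-prime, and every prime filter of A is ∨-prime. -/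
/-- A residuated `∨`-semilattice: a join-semilattice with an associative
multiplication and two residuals. -/
class ResiduatedSupSemilattice (A : Type*) extends SemilatticeSup A, Mul A where
  mul_assoc' : ∀ x y z : A, x * y * z = x * (y * z)
  arr : A → A → A
  sarr : A → A → A
  res_arr : ∀ x y z : A, x * y ≤ z ↔ x ≤ arr y z
  res_sarr : ∀ x y z : A, x * y ≤ z ↔ y ≤ sarr x z

namespace ResiduatedSupSemilattice

variable {A : Type*} [ResiduatedSupSemilattice A]

/-- A filter: a non-empty upper set closed under multiplication. -/
def RFilter (F : Set A) : Prop :=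
  F.Nonempty ∧ IsUpperSet F ∧ ∀ x ∈ F, ∀ y ∈ F, x * y ∈ F

/-- A `→`-prime filter. -/
def ArrPrime (F : Set A) : Prop := ∀ x y : A, arr x y ∈ F ∨ arr y x ∈ F

/-- A `⇝`-prime filter. -/
def SarrPrime (F : Set A) : Prop := ∀ x y : A, sarr x y ∈ F ∨ sarr y x ∈ F

/-- A prime filter: both `→`-prime and `⇝`-prime. -/
def PrimeF (F : Set A) : Prop := ArrPrime F ∧ SarrPrime F

/-- A `∨`-prime filter. -/
def JoinPrime (F : Set A) : Prop := ∀ x y : A, x ⊔ y ∈ F → x ∈ F ∨ y ∈ F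

end ResiduatedSupSemilattice

/-- An integral residuated `∨`-semilattice: the multiplicative unit `1` is
the greatest element. -/
class IntegralResiduatedSupSemilattice (A : Type*) extends
    ResiduatedSupSemilattice A, One A where
  mul_one' : ∀ x : A, x * 1 = x
  one_mul' : ∀ x : A, 1 * x = x
  le_one : ∀ x : A, x ≤ 1

open ResiduatedSupSemilattice

section Aux
variable {A : Type*} [IntegralResiduatedSupSemilattice A]

private lemma mul_le_left' (a x : A) : a * x ≤ x := by
  calc a * x ≤ 1 * x := by
        rw [res_arr]
        exact le_trans (IntegralResiduatedSupSemilattice.le_one _)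
          ((res_arr (1 : A) x (1 * x)).mp le_rfl)
    _ = x := IntegralResiduatedSupSemilattice.one_mul' x

private lemma mul_le_right' (x b : A) : x * b ≤ x := by
  calc x * b ≤ x * 1 := by
        rw [res_sarr]
        exact le_trans (IntegralResiduatedSupSemilattice.le_one _)
          ((res_sarr x (1 : A) (x * 1)).mp le_rfl)
    _ = x := IntegralResiduatedSupSemilattice.mul_one' x

private lemma arrPrime_joinPrime :
    ∀ F : Set A, RFilter F → ArrPrime F → JoinPrime F := by
  rintro F ⟨-, hUp, hMul⟩ hP x y hxy
  rcases hP x y with h | h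
  · right
    refine hUp ?_ (hMul _ h _ hxy)
    rw [res_sarr]
    refine sup_le ?_ ?_
    · rw [← res_sarr]; exact (res_arr _ _ _).mpr le_rfl
    · rw [← res_sarr]; exact mul_le_left' _ _
  · left
    refine hUp ?_ (hMul _ h _ hxy)
    rw [res_sarr]
    refine sup_le ?_ ?_
    · rw [← res_sarr]; exact mul_le_left' _ _
    · rw [← res_sarr]; exact (res_arr _ _ _).mpr le_rfl

private lemma sarrPrime_joinPrime :
    ∀ F : Set A, RFilter F → SarrPrime F → JoinPrime F := by
  rintro F ⟨-, hUp, hMul⟩ hP x y hxy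
  rcases hP x y with h | h
  · right
    refine hUp ?_ (hMul _ hxy _ h)
    rw [res_arr]
    refine sup_le ?_ ?_
    · rw [← res_arr]; exact (res_sarr _ _ _).mpr le_rfl
    · rw [← res_arr]; exact mul_le_right' _ _
  · left
    refine hUp ?_ (hMul _ hxy _ h)
    rw [res_arr]
    refine sup_le ?_ ?_
    · rw [← res_arr]; exact mul_le_right' _ _
    · rw [← res_arr]; exact (res_sarr _ _ _).mpr le_rfl

end Aux

/-- In an integral residuated `∨`-semilattice, every `→`-prime filter,
every `⇝`-prime filter and every prime filter is `∨`-prime. -/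
theorem prime_filters_are_sup_prime {A : Type*}
    [IntegralResiduatedSupSemilattice A] :
    (∀ F : Set A, RFilter F → ArrPrime F → JoinPrime F) ∧
    (∀ F : Set A, RFilter F → SarrPrime F → JoinPrime F) ∧
    (∀ F : Set A, RFilter F → PrimeF F → JoinPrime F) :=
  ⟨arrPrime_joinPrime, sarrPrime_joinPrime,
   fun F hF hP => arrPrime_joinPrime F hF hP.1⟩
end

section
/- (Prime filter theorem for 2-sided residuated ∨-semilattices.) Let A be a 2-sided residuated ∨-semilattice, F a filter of A, and a ∈ A with a ∉ F. Then there exists a ∨-prime filter G of A with F ⊆ G and a ∉ G. -/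
open ResiduatedSupSemilattice

/-- A residuated `∨`-semilattice is 2-sided if `x·y ≤ x` and `x·y ≤ y`
for all `x, y`. -/
def TwoSided (A : Type*) [ResiduatedSupSemilattice A] : Prop :=
  ∀ x y : A, x * y ≤ x ∧ x * y ≤ y

namespace PFTAux

open ResiduatedSupSemilattice

variable {A : Type*} [ResiduatedSupSemilattice A]

lemma mulm_left {x y : A} (h : x ≤ y) (z : A) : z * x ≤ z * y := by
  rw [res_sarr]; exact h.trans ((res_sarr z y (z*y)).1 le_rfl)

lemma mulm_right {x y : A} (h : x ≤ y) (z : A) : x * z ≤ y * z := by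
  rw [res_arr]; exact h.trans ((res_arr y z (y*z)).1 le_rfl)

lemma mul_sup' (z x y : A) : z * (x ⊔ y) = z * x ⊔ z * y := by
  apply le_antisymm
  · rw [res_sarr]
    exact sup_le ((res_sarr z x _).1 le_sup_left) ((res_sarr z y _).1 le_sup_right)
  · exact sup_le (mulm_left le_sup_left z) (mulm_left le_sup_right z)

lemma sup_mul' (x y z : A) : (x ⊔ y) * z = x * z ⊔ y * z := by
  apply le_antisymm
  · rw [res_arr]
    exact sup_le ((res_arr x z _).1 le_sup_left) ((res_arr y z _).1 le_sup_right)
  · exact sup_le (mulm_right le_sup_left z) (mulm_right le_sup_right z)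

/-- `pw t n` is the product of `n+1` copies of `t`. -/
def pw (t : A) : ℕ → A
  | 0 => t
  | n + 1 => t * pw t n

lemma pw_mono {t t' : A} (h : t ≤ t') : ∀ n, pw t n ≤ pw t' n
  | 0 => h
  | n + 1 => (mulm_left (pw_mono h n) t).trans (mulm_right h _)

lemma pw_add (t : A) (m n : ℕ) : pw t (m + n + 1) = pw t m * pw t n := by
  induction m with
  | zero => rw [Nat.zero_add]; rfl
  | succ m ih =>
    have : m + 1 + n + 1 = (m + n + 1) + 1 := by omega
    rw [this]
    show t * pw t (m + n + 1) = (t * pw t m) * pw t n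
    rw [ih, mul_assoc']

lemma pw_mem {G : Set A} (hG : RFilter G) {t : A} (ht : t ∈ G) : ∀ n, pw t n ∈ G
  | 0 => ht
  | n + 1 => hG.2.2 t ht _ (pw_mem hG ht n)

lemma key (h2 : TwoSided A) (g x y : A) :
    ∀ k m n, m + n = k → pw (g * (x ⊔ y)) (m + n + 1) ≤ pw (g * x) m ⊔ pw (g * y) n := by
  intro k
  induction k with
  | zero =>
    intro m n hmn
    obtain ⟨rfl, rfl⟩ : m = 0 ∧ n = 0 := by omega
    calc pw (g * (x ⊔ y)) 1 ≤ g * (x ⊔ y) := (h2 _ _).1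
      _ = g * x ⊔ g * y := mul_sup' g x y
  | succ k ih =>
    intro m n hmn
    set t := g * (x ⊔ y) with ht
    have hexp : pw t (m + n + 1) = (g * x) * pw t (m + n) ⊔ (g * y) * pw t (m + n) := by
      show t * pw t (m + n) = _
      rw [ht, mul_sup', sup_mul']
    rw [hexp]
    apply sup_le
    · rcases m with _ | m'
      · exact le_sup_left.trans' ((h2 _ _).1)
      · have h1 : pw t (m' + n + 1) ≤ pw (g * x) m' ⊔ pw (g * y) n := ih m' n (by omega)
        have h2' : m' + 1 + n = m' + n + 1 := by omega
        rw [h2']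
        calc (g * x) * pw t (m' + n + 1)
            ≤ (g * x) * (pw (g * x) m' ⊔ pw (g * y) n) := mulm_left h1 _
          _ = (g * x) * pw (g * x) m' ⊔ (g * x) * pw (g * y) n := mul_sup' _ _ _
          _ ≤ pw (g * x) (m' + 1) ⊔ pw (g * y) n :=
              sup_le_sup le_rfl (h2 _ _).2
    · rcases n with _ | n'
      · exact le_sup_right.trans' ((h2 _ _).1)
      · have h1 : pw t (m + n' + 1) ≤ pw (g * x) m ⊔ pw (g * y) n' := ih m n' (by omega)
        have h2' : m + (n' + 1) = m + n' + 1 := by omega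
        rw [h2']
        calc (g * y) * pw t (m + n' + 1)
            ≤ (g * y) * (pw (g * x) m ⊔ pw (g * y) n') := mulm_left h1 _
          _ = (g * y) * pw (g * x) m ⊔ (g * y) * pw (g * y) n' := mul_sup' _ _ _
          _ ≤ pw (g * x) m ⊔ pw (g * y) (n' + 1) :=
              sup_le_sup (h2 _ _).2 le_rfl

/-- The filter generated by a filter `G` and an element `x` (in the 2-sided case). -/
def ext (G : Set A) (x : A) : Set A := {z | ∃ g ∈ G, ∃ n, pw (g * x) n ≤ z}

lemma ext_filter (h2 : TwoSided A) {G : Set A} (hG : RFilter G) (x : A) :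
    RFilter (ext G x) ∧ G ⊆ ext G x ∧ x ∈ ext G x := by
  obtain ⟨⟨g0, hg0⟩, hup, hmul⟩ := hG
  have hGsub : G ⊆ ext G x := fun g hg => ⟨g, hg, 0, (h2 g x).1⟩
  refine ⟨⟨⟨g0, hGsub hg0⟩, ?_, ?_⟩, hGsub, ⟨g0, hg0, 0, (h2 g0 x).2⟩⟩
  · intro z z' hzz' ⟨g, hg, n, hn⟩
    exact ⟨g, hg, n, hn.trans hzz'⟩
  · rintro z1 ⟨g1, hg1, m, hm⟩ z2 ⟨g2, hg2, n, hn⟩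
    refine ⟨g1 * g2, hmul _ hg1 _ hg2, m + n + 1, ?_⟩
    have h1 : (g1 * g2) * x ≤ g1 * x := mulm_right (h2 g1 g2).1 x
    have h2' : (g1 * g2) * x ≤ g2 * x := mulm_right (h2 g1 g2).2 x
    calc pw ((g1 * g2) * x) (m + n + 1)
        = pw ((g1 * g2) * x) m * pw ((g1 * g2) * x) n := pw_add _ m n
      _ ≤ pw (g1 * x) m * pw (g2 * x) n :=
          (mulm_left (pw_mono h2' n) _).trans (mulm_right (pw_mono h1 m) _)
      _ ≤ z1 * z2 := (mulm_left hn _).trans (mulm_right hm _)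

end PFTAux


/-- The prime filter theorem for 2-sided residuated `∨`-semilattices:
any filter avoiding `a` extends to a `∨`-prime filter avoiding `a`. -/
theorem prime_filter_theorem {A : Type*} [ResiduatedSupSemilattice A]
    (h2 : TwoSided A) (F : Set A) (hF : RFilter F) (a : A) (ha : a ∉ F) :
    ∃ G : Set A, RFilter G ∧ JoinPrime G ∧ F ⊆ G ∧ a ∉ G := by
  classical
  set S : Set (Set A) := {G | RFilter G ∧ F ⊆ G ∧ a ∉ G} with hSdef
  have hFS : F ∈ S := ⟨hF, subset_rfl, ha⟩
  have hchainUB : ∀ c ⊆ S, IsChain (· ⊆ ·) c → c.Nonempty →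
      ∃ ub ∈ S, ∀ s ∈ c, s ⊆ ub := by
    intro c hcS hchain hcne
    obtain ⟨s0, hs0⟩ := hcne
    refine ⟨⋃₀ c, ⟨⟨?_, ?_, ?_⟩, ?_, ?_⟩, fun s hs => Set.subset_sUnion_of_mem hs⟩
    · obtain ⟨z, hz⟩ := (hcS hs0).1.1
      exact ⟨z, s0, hs0, hz⟩
    · rintro u v huv ⟨s, hs, hu⟩
      exact ⟨s, hs, (hcS hs).1.2.1 huv hu⟩
    · rintro u ⟨s, hs, hu⟩ v ⟨t, ht, hv⟩
      rcases hchain.total hs ht with hst | hts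
      · exact ⟨t, ht, (hcS ht).1.2.2 u (hst hu) v hv⟩
      · exact ⟨s, hs, (hcS hs).1.2.2 u hu v (hts hv)⟩
    · exact (hcS hs0).2.1.trans (Set.subset_sUnion_of_mem hs0)
    · rintro ⟨s, hs, has⟩
      exact (hcS hs).2.2 has
  obtain ⟨G, hFG, hGmem, hGmax⟩ := zorn_subset_nonempty S hchainUB F hFS
  obtain ⟨hGfil, hFGsub, haG⟩ : RFilter G ∧ F ⊆ G ∧ a ∉ G := hGmem
  refine ⟨G, hGfil, ?_, hFGsub, haG⟩
  intro x y hxy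
  by_contra hc
  push_neg at hc
  obtain ⟨hx, hy⟩ := hc
  have key1 : ∀ z, z ∉ G → a ∈ PFTAux.ext G z := by
    intro z hz
    obtain ⟨hfil, hsub, hzmem⟩ := PFTAux.ext_filter h2 hGfil z
    by_contra hane
    have hmem : PFTAux.ext G z ∈ S := ⟨hfil, hFGsub.trans hsub, hane⟩
    exact hz (hGmax hmem hsub hzmem)
  obtain ⟨g1, hg1, m, hm⟩ := key1 x hx
  obtain ⟨g2, hg2, n, hn⟩ := key1 y hy
  have hg : g1 * g2 ∈ G := hGfil.2.2 _ hg1 _ hg2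
  have hgs : (g1 * g2) * (x ⊔ y) ∈ G := hGfil.2.2 _ hg _ hxy
  have hpw : PFTAux.pw ((g1 * g2) * (x ⊔ y)) (m + n + 1) ∈ G := PFTAux.pw_mem hGfil hgs _
  have hle : PFTAux.pw ((g1 * g2) * (x ⊔ y)) (m + n + 1) ≤ a := by
    calc PFTAux.pw ((g1 * g2) * (x ⊔ y)) (m + n + 1)
        ≤ PFTAux.pw ((g1 * g2) * x) m ⊔ PFTAux.pw ((g1 * g2) * y) n :=
          PFTAux.key h2 _ x y (m + n) m n rfl
      _ ≤ PFTAux.pw (g1 * x) m ⊔ PFTAux.pw (g2 * y) n :=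
          sup_le_sup (PFTAux.pw_mono (PFTAux.mulm_right (h2 g1 g2).1 x) m)
            (PFTAux.pw_mono (PFTAux.mulm_right (h2 g1 g2).2 y) n)
      _ ≤ a ⊔ a := sup_le_sup hm hn
      _ = a := sup_idem a
  exact haG (hGfil.2.1 hle hpw)
end

section
/- Let A be a 2-sided residuated ∨-semilattice. Then every filter of A is equal to the intersection of the ∨-prime filters of A that include it. -/
open ResiduatedSupSemilattice

/-! For `a ∉ F`, Zorn's lemma gives a filter `M ⊇ F` maximal among those omitting `a`. If
`x ⊔ y ∈ M` but `x, y ∉ M`, maximality puts `a` into the filters generated by `M ∪ {x}` and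
`M ∪ {y}`: `(g * x) ^ (n + 1) ≤ a` and `(g * y) ^ (m + 1) ≤ a` for one `g ∈ M`. In the 2-sided
case `(u ⊔ v) ^ (n + m + 1) ≤ u ^ (n + 1) ⊔ v ^ (m + 1)`, since each factor `u` or `v` of a product
can be dropped; hence `(g * (x ⊔ y)) ^ (n + m + 1) ≤ a`, and `a ∈ M`. -/

namespace ResiduatedSupSemilattice

variable {A : Type*} [ResiduatedSupSemilattice A]

instance : MulLeftMono A :=
  ⟨fun x _ _ h => (res_sarr _ _ _).mpr (h.trans ((res_sarr x _ _).mp le_rfl))⟩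

instance : MulRightMono A :=
  ⟨fun x _ _ h => (res_arr _ _ _).mpr (h.trans ((res_arr _ x _).mp le_rfl))⟩

theorem mul_sup_le (x y z : A) : x * (y ⊔ z) ≤ x * y ⊔ x * z :=
  (res_sarr _ _ _).mpr <|
    sup_le ((res_sarr _ _ _).mp le_sup_left) ((res_sarr _ _ _).mp le_sup_right)

theorem sup_mul_le (x y z : A) : (x ⊔ y) * z ≤ x * z ⊔ y * z :=
  (res_arr _ _ _).mpr <|
    sup_le ((res_arr _ _ _).mp le_sup_left) ((res_arr _ _ _).mp le_sup_right)

/-- `powSucc u n = u ^ (n + 1)`: without a unit there is no zeroth power. -/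
def powSucc (u : A) : ℕ → A
  | 0 => u
  | n + 1 => u * powSucc u n

theorem powSucc_add_succ (u : A) (n m : ℕ) :
    powSucc u (n + m + 1) = powSucc u n * powSucc u m := by
  induction n with
  | zero => rw [Nat.zero_add]; rfl
  | succ n ih =>
    rw [show n + 1 + m + 1 = n + m + 1 + 1 by omega]
    exact (congrArg (u * ·) ih).trans (mul_assoc' _ _ _).symm

theorem powSucc_mono {u v : A} (h : u ≤ v) : ∀ n, powSucc u n ≤ powSucc v n
  | 0 => h
  | n + 1 => mul_le_mul' h (powSucc_mono h n)

theorem RFilter.powSucc_mem {G : Set A} (hG : RFilter G) {u : A} (hu : u ∈ G) :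
    ∀ n, powSucc u n ∈ G
  | 0 => hu
  | n + 1 => hG.2.2 u hu _ (hG.powSucc_mem hu n)

theorem RFilter.sUnion_of_isChain {c : Set (Set A)} (hc : ∀ G ∈ c, RFilter G)
    (hchain : IsChain (· ⊆ ·) c) (hne : c.Nonempty) : RFilter (⋃₀ c) := by
  obtain ⟨G, hG⟩ := hne
  refine ⟨(hc G hG).1.mono (Set.subset_sUnion_of_mem hG), ?_, ?_⟩
  · rintro x y hxy ⟨G, hG, hxG⟩
    exact ⟨G, hG, (hc G hG).2.1 hxy hxG⟩
  · rintro x ⟨G, hG, hxG⟩ y ⟨G', hG', hyG'⟩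
    rcases hchain.total hG hG' with h | h
    · exact ⟨G', hG', (hc G' hG').2.2 x (h hxG) y hyG'⟩
    · exact ⟨G, hG, (hc G hG).2.2 x hxG y (h hyG')⟩

theorem exists_maximal_rFilter_not_mem {F : Set A} (hF : RFilter F) {a : A} (ha : a ∉ F) :
    ∃ M, F ⊆ M ∧ Maximal (fun G => RFilter G ∧ a ∉ G) M := by
  refine zorn_subset_nonempty {G | RFilter G ∧ a ∉ G} ?_ F ⟨hF, ha⟩
  intro c hc hchain hne
  refine ⟨⋃₀ c, ⟨.sUnion_of_isChain (fun G hG => (hc hG).1) hchain hne, ?_⟩,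
    fun _ => Set.subset_sUnion_of_mem⟩
  rintro ⟨G, hG, haG⟩
  exact (hc hG).2 haG

theorem sup_powSucc_le (h2 : TwoSided A) (u v : A) (n m : ℕ) :
    powSucc (u ⊔ v) (n + m) ≤ powSucc u n ⊔ powSucc v m := by
  obtain ⟨k, hk⟩ : ∃ k, n + m = k := ⟨_, rfl⟩
  rw [hk]
  induction k generalizing n m with
  | zero =>
    obtain ⟨rfl, rfl⟩ : n = 0 ∧ m = 0 := by omega
    exact le_rfl
  | succ k ih =>
    set w := powSucc (u ⊔ v) k
    have hu : u * w ≤ powSucc u n ⊔ powSucc v m := by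
      cases n with
      | zero => exact (h2 u w).1.trans le_sup_left
      | succ n =>
        calc u * w ≤ u * (powSucc u n ⊔ powSucc v m) := mul_le_mul_right (ih n m (by omega)) u
          _ ≤ u * powSucc u n ⊔ u * powSucc v m := mul_sup_le _ _ _
          _ ≤ powSucc u (n + 1) ⊔ powSucc v m := sup_le_sup_left (h2 _ _).2 _
    have hv : v * w ≤ powSucc u n ⊔ powSucc v m := by
      cases m with
      | zero => exact (h2 v w).1.trans le_sup_right
      | succ m =>
        calc v * w ≤ v * (powSucc u n ⊔ powSucc v m) := mul_le_mul_right (ih n m (by omega)) v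
          _ ≤ v * powSucc u n ⊔ v * powSucc v m := mul_sup_le _ _ _
          _ ≤ powSucc u n ⊔ powSucc v (m + 1) := sup_le_sup_right (h2 _ _).2 _
    exact (sup_mul_le u v w).trans (sup_le hu hv)

/-- In the 2-sided case this is the filter generated by `G ∪ {x}`: every product of elements
of `G` and copies of `x` lies above `(g * x) ^ n`, with `g` the product of the `G`-factors. -/
def adjoin (G : Set A) (x : A) : Set A := {z | ∃ g ∈ G, ∃ n, powSucc (g * x) n ≤ z}

theorem RFilter.adjoin (h2 : TwoSided A) {G : Set A} (hG : RFilter G) (x : A) :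
    RFilter (adjoin G x) := by
  obtain ⟨g₀, hg₀⟩ := hG.1
  refine ⟨⟨x, g₀, hg₀, 0, (h2 g₀ x).2⟩, ?_, ?_⟩
  · rintro y z hyz ⟨g, hg, n, hn⟩
    exact ⟨g, hg, n, hn.trans hyz⟩
  · rintro y ⟨g, hg, n, hn⟩ z ⟨g', hg', m, hm⟩
    refine ⟨g * g', hG.2.2 g hg g' hg', n + m + 1, ?_⟩
    rw [powSucc_add_succ]
    exact mul_le_mul' ((powSucc_mono (mul_le_mul_left (h2 g g').1 x) n).trans hn)
      ((powSucc_mono (mul_le_mul_left (h2 g g').2 x) m).trans hm)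

theorem subset_adjoin (h2 : TwoSided A) (G : Set A) (x : A) : G ⊆ adjoin G x :=
  fun g hg => ⟨g, hg, 0, (h2 g x).1⟩

theorem mem_adjoin_self (h2 : TwoSided A) {G : Set A} (hG : G.Nonempty) (x : A) :
    x ∈ adjoin G x :=
  let ⟨g, hg⟩ := hG
  ⟨g, hg, 0, (h2 g x).2⟩

theorem adjoin_subset_of_mem {G : Set A} (hG : RFilter G) {x : A} (hx : x ∈ G) :
    adjoin G x ⊆ G := by
  rintro z ⟨g, hg, n, hn⟩
  exact hG.2.1 hn (hG.powSucc_mem (hG.2.2 g hg x hx) n)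

theorem adjoin_inter_adjoin_subset (h2 : TwoSided A) {G : Set A} (hG : RFilter G) (x y : A) :
    adjoin G x ∩ adjoin G y ⊆ adjoin G (x ⊔ y) := by
  rintro z ⟨⟨g, hg, n, hn⟩, ⟨g', hg', m, hm⟩⟩
  refine ⟨g * g', hG.2.2 g hg g' hg', n + m, ?_⟩
  calc powSucc (g * g' * (x ⊔ y)) (n + m)
      ≤ powSucc (g * g' * x ⊔ g * g' * y) (n + m) := powSucc_mono (mul_sup_le _ _ _) _
    _ ≤ powSucc (g * g' * x) n ⊔ powSucc (g * g' * y) m := sup_powSucc_le h2 _ _ n m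
    _ ≤ powSucc (g * x) n ⊔ powSucc (g' * y) m :=
        sup_le_sup (powSucc_mono (mul_le_mul_left (h2 g g').1 x) n)
          (powSucc_mono (mul_le_mul_left (h2 g g').2 y) m)
    _ ≤ z := sup_le hn hm

theorem mem_adjoin_of_maximal (h2 : TwoSided A) {a : A} {M : Set A}
    (hM : Maximal (fun G => RFilter G ∧ a ∉ G) M) {x : A} (hx : x ∉ M) : a ∈ adjoin M x := by
  by_contra ha
  have hMx : adjoin M x ⊆ M := hM.2 ⟨hM.1.1.adjoin h2 x, ha⟩ (subset_adjoin h2 M x)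
  exact hx (hMx (mem_adjoin_self h2 hM.1.1.1 x))

theorem joinPrime_of_maximal (h2 : TwoSided A) {a : A} {M : Set A}
    (hM : Maximal (fun G => RFilter G ∧ a ∉ G) M) : JoinPrime M := by
  intro x y hxy
  by_contra! hxy'
  have ha := adjoin_inter_adjoin_subset h2 hM.1.1 x y
    ⟨mem_adjoin_of_maximal h2 hM hxy'.1, mem_adjoin_of_maximal h2 hM hxy'.2⟩
  exact hM.1.2 (adjoin_subset_of_mem hM.1.1 hxy ha)

end ResiduatedSupSemilattice

/-- Every filter of a 2-sided residuated `∨`-semilattice is the intersection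
of the `∨`-prime filters including it. -/
theorem filter_eq_sInter_sup_prime {A : Type*} [ResiduatedSupSemilattice A]
    (h2 : TwoSided A) (F : Set A) (hF : RFilter F) :
    F = ⋂₀ {G : Set A | RFilter G ∧ JoinPrime G ∧ F ⊆ G} := by
  refine (Set.subset_sInter fun G hG => hG.2.2).antisymm fun a ha => ?_
  by_contra haF
  obtain ⟨M, hFM, hM⟩ := exists_maximal_rFilter_not_mem hF haF
  exact hM.1.2 (ha M ⟨hM.1.1, joinPrime_of_maximal h2 hM, hFM⟩)
end
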